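/- Suppose the data is exactly rational of degree (n,n): let p, q ∈ ℂ[X] have degree at most n, let ẑ_0, …, ẑ_n be pairwise distinct complex nodes with q(ẑ_k) ≠ 0 for all k, and set f_k = p(ẑ_k)/q(ẑ_k). Define b ∈ ℂ^{n+1} by b_k = q(ẑ_k) · ∏_{j≠k}(ẑ_k − ẑ_j)^{-1}. Then b ≠ 0, and for every ž ∈ ℂ with ž ≠ ẑ_k for all k and q(ž) ≠ 0, the Loewner residual vanishes: ∑_{k=0}^n b_k (p(ž)/q(ž) − f_k)(ž − ẑ_k)^{-1} = 0. Hence the Loewner matrix built from samples of a degree (n,n) rational function has a nontrivial kernel, and AAA can recover rational functions exactly. -/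

import Mathlib

/-!
For a fixed sample point `zc`, the polynomial `P = p(zc) q - q(zc) p` has degree at most `n`
and vanishes at `zc`. Since `n + 1` nodes determine it, the barycentric form of its Lagrange
interpolant gives `∑ₖ wₖ P(ẑₖ) / (zc - ẑₖ) = 0`, and dividing by `q(zc)` this sum is exactly
the Loewner residual of `bₖ = q(ẑₖ) wₖ`.
-/

open Polynomial Finset Lagrange

theorem Lagrange.sum_nodalWeight_mul_eval_eq_zero {F ι : Type*} [Field F] [DecidableEq ι]
    {s : Finset ι} {v : ι → F} {P : F[X]} {x : F} (hvs : Set.InjOn v s) (hP : P.degree < #s)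
    (hx : ∀ i ∈ s, x ≠ v i) (hPx : P.eval x = 0) :
    ∑ i ∈ s, nodalWeight s v i * (x - v i)⁻¹ * P.eval (v i) = 0 := by
  have h := eval_interpolate_not_at_node (r := fun i ↦ P.eval (v i)) hx
  rw [← eq_interpolate hvs hP, hPx] at h
  exact (mul_eq_zero.mp h.symm).resolve_left (eval_nodal_not_at_node hx)

theorem Polynomial.degree_smul_sub_smul_le {R : Type*} [Ring R] {p q : R[X]} {n : ℕ}
    (hp : p.degree ≤ n) (hq : q.degree ≤ n) (a c : R) : (a • q - c • p).degree ≤ n :=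
  (degree_sub_le _ _).trans <|
    max_le ((degree_smul_le _ _).trans hq) ((degree_smul_le _ _).trans hp)

theorem Polynomial.eval_eval_smul_sub_eval_smul_self {R : Type*} [CommRing R] (p q : R[X])
    (x : R) : (p.eval x • q - q.eval x • p).eval x = 0 := by
  simp only [eval_sub, eval_smul, smul_eq_mul, mul_comm, sub_self]

/-- If the data come from an exact degree `(n,n)` rational function `p/q` sampled at `n+1`
distinct nodes `zh k` (with `q (zh k) ≠ 0`), then the coefficient vector
`b k = q(zh k) * (∏_{j ≠ k} (zh k - zh j))⁻¹` is nonzero and annihilates the Loewner residual: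
for every point `zc` distinct from the nodes with `q(zc) ≠ 0`,
`∑ k, b k * (p(zc)/q(zc) - f k) * (zc - zh k)⁻¹ = 0`. Hence the Loewner matrix built from
samples of a degree `(n,n)` rational function has a nontrivial kernel. -/
theorem loewner_nontrivial_kernel_of_rational_data (n : ℕ) (p q : Polynomial ℂ)
    (hp : p.degree ≤ n) (hq : q.degree ≤ n)
    (zh : Fin (n + 1) → ℂ) (hzh : Function.Injective zh)
    (hqz : ∀ k, q.eval (zh k) ≠ 0)
    (f : Fin (n + 1) → ℂ) (hf : ∀ k, f k = p.eval (zh k) / q.eval (zh k))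
    (b : Fin (n + 1) → ℂ)
    (hb : ∀ k, b k = q.eval (zh k) * (∏ j ∈ Finset.univ.erase k, (zh k - zh j))⁻¹) :
    b ≠ 0 ∧
      ∀ zc : ℂ, (∀ k, zc ≠ zh k) → q.eval zc ≠ 0 →
        ∑ k, b k * (p.eval zc / q.eval zc - f k) * (zc - zh k)⁻¹ = 0 := by
  have hinj : Set.InjOn zh (univ : Finset (Fin (n + 1))) := hzh.injOn
  have hb' : ∀ k, b k = q.eval (zh k) * nodalWeight univ zh k := fun k ↦ by
    rw [hb, nodalWeight, prod_inv_distrib]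
  refine ⟨fun h0 ↦ ?_, fun zc hzc hqc ↦ ?_⟩
  · have hb0 := congrFun h0 0
    rw [hb' 0] at hb0
    exact mul_ne_zero (hqz 0) (nodalWeight_ne_zero hinj (mem_univ 0)) hb0
  set P := p.eval zc • q - q.eval zc • p
  have hP : P.degree < #(univ : Finset (Fin (n + 1))) := by
    rw [card_univ, Fintype.card_fin]
    exact (degree_smul_sub_smul_le hp hq _ _).trans_lt (by exact_mod_cast n.lt_succ_self)
  have hsum := sum_nodalWeight_mul_eval_eq_zero hinj hP (fun k _ ↦ hzc k)
    (eval_eval_smul_sub_eval_smul_self p q zc)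
  have hterm : ∀ k, b k * (p.eval zc / q.eval zc - f k) * (zc - zh k)⁻¹ =
      (q.eval zc)⁻¹ * (nodalWeight univ zh k * (zc - zh k)⁻¹ * P.eval (zh k)) := fun k ↦ by
    have hqk := hqz k
    simp only [P, hb', hf, eval_sub, eval_smul, smul_eq_mul]
    field_simp
  rw [sum_congr rfl fun k _ ↦ hterm k, ← mul_sum, hsum, mul_zero]
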